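/- Let f_sin(x) = e^{x²/2} ∫_{-∞}^x sin(y) e^{-y²/2} dy be the Stein solution associated with the sine function (note that ∫ sin dγ = 0 by symmetry of the standard Gaussian measure γ). Then f_sin is three times differentiable on ℝ, and its second and third derivatives satisfy |f_sin''(x)| ≤ 2 and |f_sin'''(x)| ≤ 2 for all x ∈ ℝ. -/

import Mathlib

open MeasureTheory ProbabilityTheory Real

/-- The Stein solution associated with the sine function:
`f_sin(x) = e^{x²/2} ∫_{-∞}^x sin(y) e^{-y²/2} dy`. -/
noncomputable def steinSolSin : ℝ → ℝ := fun x =>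
  Real.exp (x ^ 2 / 2) * ∫ y in Set.Iic x, Real.sin y * Real.exp (-(y ^ 2) / 2)

/-!
`f_sin(x) = -∫₀¹ cos(t x) e^{(t² - 1)/2} dt`: both sides solve the Stein equation
`f' = x f + sin` and vanish, after multiplication by `e^{-x²/2}`, at `-∞`. Differentiating under
this integral sign `k` times gives `f_sin^{(k)}(x) = ∫₀¹ t^k φ_k(t x) e^{(t² - 1)/2} dt` with
`φ_k = ±sin, ±cos`, and the integrand is bounded by `1` on `[0, 1]`.
-/

open Filter Topology intervalIntegral

lemma integral_gaussianReal_zero_of_odd {f : ℝ → ℝ} (hf : ∀ y, f (-y) = -f y) (v : NNReal) :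
    ∫ y, f y ∂gaussianReal 0 v = 0 := by
  have h : ∫ y, f y ∂(gaussianReal 0 v).map (fun y => -y) = ∫ y, f (-y) ∂gaussianReal 0 v :=
    integral_map_equiv (MeasurableEquiv.neg ℝ) f
  rw [gaussianReal_map_neg, neg_zero] at h
  simp only [hf, MeasureTheory.integral_neg] at h
  linarith

noncomputable def weightedMoment (φ : ℝ → ℝ) (k : ℕ) (x : ℝ) : ℝ :=
  ∫ t in (0 : ℝ)..1, t ^ k * φ (t * x) * exp ((t ^ 2 - 1) / 2)

lemma abs_pow_mul_mul_exp_le_one {t c : ℝ} (ht : t ∈ Set.uIoc 0 1) (hc : |c| ≤ 1) (k : ℕ) :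
    |t ^ k * c * exp ((t ^ 2 - 1) / 2)| ≤ 1 := by
  rw [Set.uIoc_of_le zero_le_one] at ht
  have htk : |t ^ k| ≤ 1 := by
    rw [abs_pow, abs_of_pos ht.1]
    exact pow_le_one₀ ht.1.le ht.2
  have hexp : |exp ((t ^ 2 - 1) / 2)| ≤ 1 := by
    rw [abs_of_pos (exp_pos _), exp_le_one_iff]
    nlinarith [ht.1, ht.2]
  rw [abs_mul, abs_mul]
  exact mul_le_one₀ (mul_le_one₀ htk (abs_nonneg _) hc) (abs_nonneg _) hexp

lemma abs_weightedMoment_le_one {φ : ℝ → ℝ} (hφ : ∀ y, |φ y| ≤ 1) (k : ℕ) (x : ℝ) :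
    |weightedMoment φ k x| ≤ 1 := by
  simpa [weightedMoment] using norm_integral_le_of_norm_le_const (C := 1)
    (f := fun t => t ^ k * φ (t * x) * exp ((t ^ 2 - 1) / 2))
    fun t ht => abs_pow_mul_mul_exp_le_one ht (hφ (t * x)) k

lemma hasDerivAt_weightedMoment {φ φ' : ℝ → ℝ} (hφ : ∀ y, HasDerivAt φ (φ' y) y)
    (hφ'_cont : Continuous φ') (hφ'_le : ∀ y, |φ' y| ≤ 1) (k : ℕ) (x : ℝ) :
    HasDerivAt (weightedMoment φ k) (weightedMoment φ' (k + 1) x) x := by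
  have hφ_cont : Continuous φ := continuous_iff_continuousAt.2 fun y => (hφ y).continuousAt
  refine (hasDerivAt_integral_of_dominated_loc_of_deriv_le (bound := fun _ => 1)
    (F' := fun x t => t ^ (k + 1) * φ' (t * x) * exp ((t ^ 2 - 1) / 2))
    univ_mem (Eventually.of_forall fun y => (by fun_prop : Continuous _).aestronglyMeasurable)
    ((by fun_prop : Continuous _).intervalIntegrable 0 1)
    (by fun_prop : Continuous _).aestronglyMeasurable
    (Eventually.of_forall fun t ht y _ => abs_pow_mul_mul_exp_le_one ht (hφ'_le _) (k + 1))
    intervalIntegrable_const (Eventually.of_forall fun t _ y _ => ?_)).2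
  have h := (((hφ (t * y)).comp y ((hasDerivAt_id y).const_mul t)).const_mul (t ^ k)).mul_const
    (exp ((t ^ 2 - 1) / 2))
  refine h.congr_deriv ?_
  ring

lemma hasDerivAt_exp_sq_sub_one_div_two (t : ℝ) :
    HasDerivAt (fun t => exp ((t ^ 2 - 1) / 2)) (t * exp ((t ^ 2 - 1) / 2)) t := by
  convert (((hasDerivAt_pow 2 t).sub_const 1).div_const 2).exp using 1
  push_cast
  ring

lemma hasDerivAt_weightedMoment_neg_cos (k : ℕ) (x : ℝ) :
    HasDerivAt (weightedMoment (-cos) k) (weightedMoment sin (k + 1) x) x :=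
  hasDerivAt_weightedMoment (fun y => by simpa using (hasDerivAt_cos y).neg)
    continuous_sin abs_sin_le_one k x

-- Together with `hasDerivAt_weightedMoment_neg_cos`, this is the Stein equation `f' = x f + sin`
-- for `f = weightedMoment (-cos) 0`.
lemma weightedMoment_sin_one (x : ℝ) :
    weightedMoment sin 1 x = x * weightedMoment (-cos) 0 x + sin x := by
  have hderiv (t : ℝ) : HasDerivAt (fun t => sin (t * x) * exp ((t ^ 2 - 1) / 2))
      (t ^ 1 * sin (t * x) * exp ((t ^ 2 - 1) / 2)
        - x * (t ^ 0 * -cos (t * x) * exp ((t ^ 2 - 1) / 2))) t := by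
    refine (((hasDerivAt_sin _).comp t ((hasDerivAt_id t).mul_const x)).mul
      (hasDerivAt_exp_sq_sub_one_div_two t)).congr_deriv ?_
    simp only [Function.comp_apply, id_eq, one_mul]
    ring
  have hftc := integral_eq_sub_of_hasDerivAt (fun t _ => hderiv t)
    ((by fun_prop : Continuous _).intervalIntegrable 0 1)
  simp only [one_mul, zero_mul, sin_zero, one_pow, sub_self, zero_div, exp_zero,
    mul_one, sub_zero] at hftc
  rw [integral_sub ((by fun_prop : Continuous _).intervalIntegrable 0 1)
    ((by fun_prop : Continuous _).intervalIntegrable 0 1),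
    intervalIntegral.integral_const_mul] at hftc
  simp only [weightedMoment, Pi.neg_apply]
  linarith

lemma integrable_sin_mul_exp_neg_sq_div_two :
    Integrable fun y : ℝ => sin y * exp (-(y ^ 2) / 2) := by
  refine (integrable_exp_neg_mul_sq (b := 1 / 2) (by norm_num)).bdd_mul (c := 1)
    continuous_sin.aestronglyMeasurable (Eventually.of_forall fun y => abs_sin_le_one y) |>.congr ?_
  filter_upwards with y
  congr 2
  ring

lemma tendsto_exp_neg_sq_div_two_atBot :
    Tendsto (fun y : ℝ => exp (-(y ^ 2) / 2)) atBot (𝓝 0) := by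
  have h : Tendsto (fun y : ℝ => y ^ 2 / 2) atBot atTop := by
    simpa [sq] using (tendsto_id.atBot_mul_atBot₀ tendsto_id).atTop_div_const two_pos
  refine (tendsto_exp_neg_atTop_nhds_zero.comp h).congr fun y => ?_
  rw [Function.comp_apply, neg_div]

lemma steinSolSin_eq_weightedMoment (x : ℝ) :
    steinSolSin x = weightedMoment (-cos) 0 x := by
  set f := weightedMoment (-cos) 0
  have hderiv (y : ℝ) : HasDerivAt (fun y => exp (-(y ^ 2) / 2) * f y)
      (sin y * exp (-(y ^ 2) / 2)) y := by
    have hf := hasDerivAt_weightedMoment_neg_cos 0 y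
    rw [weightedMoment_sin_one] at hf
    refine (((hasDerivAt_pow 2 y).neg.div_const 2).exp.mul hf).congr_deriv ?_
    simp only [Pi.neg_apply]
    push_cast
    ring
  have hlim : Tendsto (fun y => exp (-(y ^ 2) / 2) * f y) atBot (𝓝 0) :=
    tendsto_exp_neg_sq_div_two_atBot.zero_mul_isBoundedUnder_le
      (isBoundedUnder_of ⟨1, fun y =>
        abs_weightedMoment_le_one (fun y => by simpa using abs_cos_le_one y) 0 y⟩)
  rw [steinSolSin, integral_Iic_of_hasDerivAt_of_tendsto' (fun y _ => hderiv y)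
    integrable_sin_mul_exp_neg_sq_div_two.integrableOn hlim, sub_zero, ← mul_assoc, ← exp_add]
  rw [show x ^ 2 / 2 + -(x ^ 2) / 2 = 0 by ring, exp_zero, one_mul]

/-- `∫ sin dγ = 0` for the standard Gaussian `γ`; `f_sin` is three times differentiable,
and its second and third derivatives are bounded by `2` everywhere. -/
theorem stmt_4 :
    (∫ y, Real.sin y ∂(gaussianReal 0 1)) = 0 ∧
    Differentiable ℝ steinSolSin ∧
    Differentiable ℝ (deriv steinSolSin) ∧
    Differentiable ℝ (deriv (deriv steinSolSin)) ∧
    (∀ x : ℝ, |deriv (deriv steinSolSin) x| ≤ 2) ∧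
    (∀ x : ℝ, |deriv (deriv (deriv steinSolSin)) x| ≤ 2) := by
  have h0 : steinSolSin = weightedMoment (-cos) 0 := funext steinSolSin_eq_weightedMoment
  have h1 := hasDerivAt_weightedMoment_neg_cos 0
  have h2 (x : ℝ) : HasDerivAt (weightedMoment sin 1) (weightedMoment cos 2 x) x :=
    hasDerivAt_weightedMoment hasDerivAt_sin continuous_cos abs_cos_le_one 1 x
  have h3 (x : ℝ) : HasDerivAt (weightedMoment cos 2) (weightedMoment (-sin) 3 x) x :=
    hasDerivAt_weightedMoment hasDerivAt_cos continuous_sin.neg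
      (fun y => by simpa using abs_sin_le_one y) 2 x
  have hd1 : deriv steinSolSin = weightedMoment sin 1 := h0 ▸ funext fun x => (h1 x).deriv
  have hd2 : deriv (weightedMoment sin 1) = weightedMoment cos 2 := funext fun x => (h2 x).deriv
  have hd3 : deriv (weightedMoment cos 2) = weightedMoment (-sin) 3 :=
    funext fun x => (h3 x).deriv
  refine ⟨integral_gaussianReal_zero_of_odd sin_neg 1, h0 ▸ fun x => (h1 x).differentiableAt,
    hd1 ▸ fun x => (h2 x).differentiableAt, hd1 ▸ hd2 ▸ fun x => (h3 x).differentiableAt,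
    fun x => ?_, fun x => ?_⟩
  · rw [hd1, hd2]
    linarith [abs_weightedMoment_le_one abs_cos_le_one 2 x]
  · rw [hd1, hd2, hd3]
    linarith [abs_weightedMoment_le_one (φ := -sin) (fun y => by simpa using abs_sin_le_one y) 3 x]
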